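/- Let M ≥ 0 and let T^{(M+1)} be the (M+1)×(M+1) discrete Laplacian. The set of real eigenvalues of T^{(M+1)} is exactly { 2 − 2·cos(kπ/(M+2)) : k = 1, 2, …, M+1 }, and every eigenvalue of T^{(M+1)} (over ℂ) is real. -/

import Mathlib

/-!
For `θ = k π / (n + 1)` the sequence `u m = sin (m θ)` vanishes at the ghost points `m = 0` and
`m = n + 1` and satisfies `u (m - 1) + u (m + 1) = 2 cos θ · u m`, so `(u 1, …, u n)` is an
eigenvector of the `n × n` discrete Laplacian with eigenvalue `2 - 2 cos θ`. For `k = 1, …, n`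
these are `n` distinct eigenvalues; since eigenvectors for distinct eigenvalues are linearly
independent, an `n`-dimensional space leaves room for no other eigenvalue, over `ℝ` or over any
field containing `ℝ`, such as `ℂ`.
-/

open Matrix Real

/-- The `(n)×(n)` discrete Laplacian: `2` on the diagonal, `-1` on the
sub/super-diagonals, over a commutative ring `R`. -/
def discreteLaplacian (n : ℕ) (R : Type*) [CommRing R] : Matrix (Fin n) (Fin n) R :=
  fun i j =>
    if (i : ℕ) = (j : ℕ) then 2
    else if (i : ℕ) + 1 = (j : ℕ) ∨ (j : ℕ) + 1 = (i : ℕ) then -1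
    else 0

open Module End in
theorem Module.End.mem_of_hasEigenvalue_of_finrank_le_card {K V : Type*} [Field K]
    [AddCommGroup V] [Module K V] [FiniteDimensional K V] {f : End K V} {s : Finset K}
    (hs : ∀ a ∈ s, f.HasEigenvalue a) (hcard : finrank K V ≤ s.card) {μ : K}
    (hμ : f.HasEigenvalue μ) : μ ∈ s := by
  classical
  by_contra hμs
  have hvec : ∀ a : ↥(insert μ s), ∃ v, f.HasEigenvector a v := fun a ↦
    (Finset.mem_insert.1 a.2).elim (fun h ↦ by rw [h]; exact hμ) (hs a) |>.exists_hasEigenvector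
  choose v hv using hvec
  have := (f.eigenvectors_linearIndependent' _ Subtype.val_injective v hv).fintype_card_le_finrank
  rw [Fintype.card_coe, Finset.card_insert_of_notMem hμs] at this
  omega

open Module End in
theorem Matrix.hasEigenvalue_toLin'_iff {R n : Type*} [CommRing R] [Fintype n] [DecidableEq n]
    (A : Matrix n n R) (μ : R) :
    HasEigenvalue (toLin' A) μ ↔ ∃ v, v ≠ 0 ∧ A *ᵥ v = μ • v := by
  refine ⟨fun h ↦ ?_, fun ⟨v, hv, hAv⟩ ↦
    hasEigenvalue_of_hasEigenvector ⟨mem_eigenspace_iff.2 hAv, hv⟩⟩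
  obtain ⟨v, hv, hv0⟩ := h.exists_hasEigenvector
  exact ⟨v, hv0, mem_eigenspace_iff.1 hv⟩

theorem discreteLaplacian_map {R S : Type*} [CommRing R] [CommRing S] (f : R →+* S) (n : ℕ) :
    (discreteLaplacian n R).map f = discreteLaplacian n S := by
  ext i j
  simp only [discreteLaplacian, map_apply]
  split_ifs <;> simp [map_ofNat f 2]

theorem discreteLaplacian_mulVec_apply {R : Type*} [CommRing R] {n : ℕ} (u : ℕ → R)
    (h0 : u 0 = 0) (hn : u (n + 1) = 0) (i : Fin n) :
    (discreteLaplacian n R *ᵥ fun j ↦ u (j + 1)) i = 2 * u (i + 1) - u i - u (i + 2) := by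
  obtain ⟨a, ha⟩ := i
  simp only [mulVec, dotProduct, discreteLaplacian]
  rw [Fin.sum_univ_eq_sum_range (fun b ↦ (if a = b then (2 : R) else
    if a + 1 = b ∨ b + 1 = a then -1 else 0) * u (b + 1))]
  have hsplit : ∀ b, (if a = b then (2 : R) else if a + 1 = b ∨ b + 1 = a then -1 else 0) *
      u (b + 1) = (if a = b then 2 * u (a + 1) else 0) - (if a + 1 = b then u (a + 2) else 0) -
        (if b + 1 = a then u a else 0) := by
    intro b
    split_ifs <;> subst_vars <;> first | omega | ring
  simp only [hsplit, Finset.sum_sub_distrib, Finset.sum_ite_eq, Finset.mem_range, ha, if_true]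
  have hnext : (if a + 1 < n then u (a + 2) else 0) = u (a + 2) := by
    split_ifs with h
    · rfl
    · rw [show a + 2 = n + 1 by omega, hn]
  have hprev : ∑ b ∈ Finset.range n, (if b + 1 = a then u a else 0) = u a := by
    rcases a with _ | c
    · simp [h0]
    · simp only [add_left_inj, Finset.sum_ite_eq', Finset.mem_range]
      rw [if_pos (by omega)]
  rw [hnext, hprev]
  ring

theorem discreteLaplacian_mulVec_eq_smul {R : Type*} [CommRing R] {n : ℕ} (u : ℕ → R) (c : R)
    (h0 : u 0 = 0) (hn : u (n + 1) = 0) (hrec : ∀ m, u m + u (m + 2) = c * u (m + 1)) :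
    discreteLaplacian n R *ᵥ (fun j ↦ u (j + 1)) = (2 - c) • fun j : Fin n ↦ u (j + 1) := by
  ext i
  rw [discreteLaplacian_mulVec_apply u h0 hn, Pi.smul_apply, smul_eq_mul]
  linear_combination -hrec i

noncomputable def laplacianAngle (n k : ℕ) : ℝ := k * π / (n + 1)

noncomputable def laplacianEigenvector (n k : ℕ) : Fin n → ℝ :=
  fun j ↦ sin ((j + 1 : ℕ) * laplacianAngle n k)

theorem discreteLaplacian_mulVec_laplacianEigenvector (n k : ℕ) :
    discreteLaplacian n ℝ *ᵥ laplacianEigenvector n k =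
      (2 - 2 * cos (laplacianAngle n k)) • laplacianEigenvector n k := by
  set θ := laplacianAngle n k
  have hn : sin ((n + 1 : ℕ) * θ) = 0 := by
    rw [show ((n + 1 : ℕ) : ℝ) * θ = k * π by
      simp only [θ, laplacianAngle]; push_cast; field_simp]
    exact sin_nat_mul_pi k
  refine discreteLaplacian_mulVec_eq_smul (fun m : ℕ ↦ sin (m * θ)) _ (by simp) hn fun m ↦ ?_
  have h := sin_add_sin ((m : ℝ) * θ) ((m + 2 : ℕ) * θ)
  push_cast at h ⊢
  rw [h, show ((m : ℝ) * θ + (m + 2) * θ) / 2 = (m + 1) * θ by ring,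
    show ((m : ℝ) * θ - (m + 2) * θ) / 2 = -θ by ring, cos_neg]
  ring

theorem laplacianAngle_mem_Ioo {n k : ℕ} (hk : k ∈ Finset.Icc 1 n) :
    laplacianAngle n k ∈ Set.Ioo 0 π := by
  obtain ⟨hk1, hkn⟩ := Finset.mem_Icc.1 hk
  have hk1' : (1 : ℝ) ≤ k := by exact_mod_cast hk1
  have hkn' : (k : ℝ) < n + 1 := by exact_mod_cast Nat.lt_succ_of_le hkn
  constructor
  · unfold laplacianAngle; positivity
  · rw [laplacianAngle, div_lt_iff₀ (by positivity)]
    nlinarith [pi_pos]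

theorem laplacianEigenvector_ne_zero {n k : ℕ} (hk : k ∈ Finset.Icc 1 n) :
    laplacianEigenvector n k ≠ 0 := by
  have hn : 0 < n := by have := Finset.mem_Icc.1 hk; omega
  intro h
  have h0 := congrFun h ⟨0, hn⟩
  simp only [laplacianEigenvector, Nat.cast_one, zero_add, one_mul, Pi.zero_apply] at h0
  exact (sin_pos_of_mem_Ioo (laplacianAngle_mem_Ioo hk)).ne' h0

theorem injOn_cos_laplacianAngle (n : ℕ) :
    Set.InjOn (fun k ↦ cos (laplacianAngle n k)) (Finset.Icc 1 n) := by
  intro a ha b hb hab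
  have hangle := injOn_cos (Set.Ioo_subset_Icc_self (laplacianAngle_mem_Ioo ha))
    (Set.Ioo_subset_Icc_self (laplacianAngle_mem_Ioo hb)) hab
  simp only [laplacianAngle] at hangle
  field_simp at hangle
  exact_mod_cast hangle

open Module End in
theorem hasEigenvalue_discreteLaplacian_iff {K : Type*} [Field K] [Algebra ℝ K] (n : ℕ)
    (μ : K) :
    HasEigenvalue (toLin' (discreteLaplacian n K)) μ ↔
      ∃ k ∈ Finset.Icc 1 n, algebraMap ℝ K (2 - 2 * cos (laplacianAngle n k)) = μ := by
  set eigenvalue : ℕ → K := fun k ↦ algebraMap ℝ K (2 - 2 * cos (laplacianAngle n k))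
  have hmem : ∀ k ∈ Finset.Icc 1 n,
      HasEigenvalue (toLin' (discreteLaplacian n K)) (eigenvalue k) := by
    intro k hk
    rw [hasEigenvalue_toLin'_iff]
    refine ⟨algebraMap ℝ K ∘ laplacianEigenvector n k,
      fun h ↦ laplacianEigenvector_ne_zero hk ?_, ?_⟩
    · exact (algebraMap ℝ K).injective.comp_left (h.trans (by ext; simp))
    · ext i
      rw [← discreteLaplacian_map (algebraMap ℝ K), ← RingHom.map_mulVec,
        discreteLaplacian_mulVec_laplacianEigenvector]
      simp [eigenvalue]
  have hinj : Set.InjOn eigenvalue (Finset.Icc 1 n) := fun a ha b hb hab ↦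
    injOn_cos_laplacianAngle n ha hb (by simpa [eigenvalue] using hab)
  refine ⟨fun h ↦ ?_, fun ⟨k, hk, hμ⟩ ↦ hμ ▸ hmem k hk⟩
  classical
  have := mem_of_hasEigenvalue_of_finrank_le_card (s := (Finset.Icc 1 n).image eigenvalue)
    (by simpa only [Finset.forall_mem_image] using hmem)
    (by rw [Finset.card_image_of_injOn hinj]; simp) h
  exact Finset.mem_image.1 this

/-- the real eigenvalues of the discrete Laplacian `T^{(M+1)}`
are exactly `2 − 2 cos(kπ/(M+2))`, `k = 1, …, M+1`, and every complex
eigenvalue is real. -/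
theorem discreteLaplacian_eigenvalues (M : ℕ) :
    ({μ : ℝ | ∃ v : Fin (M + 1) → ℝ, v ≠ 0 ∧
        discreteLaplacian (M + 1) ℝ *ᵥ v = μ • v} =
      {μ : ℝ | ∃ k : ℕ, 1 ≤ k ∧ k ≤ M + 1 ∧
        μ = 2 - 2 * Real.cos (k * Real.pi / (M + 2))}) ∧
    (∀ μ : ℂ, (∃ v : Fin (M + 1) → ℂ, v ≠ 0 ∧
        discreteLaplacian (M + 1) ℂ *ᵥ v = μ • v) → μ.im = 0) := by
  have hangle (k : ℕ) : laplacianAngle (M + 1) k = k * π / (M + 2) := by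
    rw [laplacianAngle]; push_cast; ring
  constructor
  · ext μ
    simp only [Set.mem_ofPred_eq, ← hasEigenvalue_toLin'_iff, hasEigenvalue_discreteLaplacian_iff,
      Finset.mem_Icc, hangle, Algebra.algebraMap_self, RingHom.id_apply]
    exact exists_congr fun k ↦ by rw [and_assoc, eq_comm]
  · intro μ hμ
    obtain ⟨k, -, rfl⟩ := (hasEigenvalue_discreteLaplacian_iff _ μ).1
      ((hasEigenvalue_toLin'_iff _ μ).2 hμ)
    exact Complex.ofReal_im _
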